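/- arXiv:2102.08853 — 2 statements merged into one kernel-verified Lean document; each statement's English description precedes it below -/
import Mathlib

section
/- If the A_{ij} are holonomic for G, then the limit probability vector p in Theorem 1 equals the output of Algorithm 1: fixing a base node v₁, setting q₁ = 1 and q_i = R_w for any walk w from v₁ to v_i, and normalizing p = q/∑_i q_i. -/
open Matrix Finset

/-- The local stochastic matrix `A_{ij}`: identity except for the 2×2 principal
submatrix on rows/columns `i,j`, which is `[[1-a_{ij}, a_{ij}],[a_{ji}, 1-a_{ji}]]`. -/
def locMat {n : ℕ} (a : Fin n → Fin n → ℝ) (i j : Fin n) : Matrix (Fin n) (Fin n) ℝ :=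
  Matrix.of fun k l =>
    if k = i then (if l = i then 1 - a i j else if l = j then a i j else 0)
    else if k = j then (if l = i then a j i else if l = j then 1 - a j i else 0)
    else if k = l then 1 else 0

/-- `R_w`: the product of the ratios `r` along the (directed) edges of a walk `w`. -/
def Rwalk {n : ℕ} (r : Fin n → Fin n → ℝ) {G : SimpleGraph (Fin n)} {u v : Fin n}
    (w : G.Walk u v) : ℝ :=
  (w.darts.map fun d => r d.toProd.1 d.toProd.2).prod

/-- The local stochastic matrices (given by the weights `a`) are holonomic for `G`:
`R_C = 1` for every cycle `C` of length greater than 2. -/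
def Holonomic {n : ℕ} (G : SimpleGraph (Fin n)) (a : Fin n → Fin n → ℝ) : Prop :=
  ∀ (u : Fin n) (c : G.Walk u u), c.IsCycle → 2 < c.length →
    Rwalk (fun i j => a i j / a j i) c = 1

/-- The left-ordered product `P_{γ(t:0)} = A_{e_t} ⋯ A_{e_1}` along an infinite edge
sequence `γ`. -/
def Pseq {n : ℕ} (a : Fin n → Fin n → ℝ) (γ : ℕ → Fin n × Fin n) :
    ℕ → Matrix (Fin n) (Fin n) ℝ
  | 0 => 1
  | t + 1 => locMat a (γ t).1 (γ t).2 * Pseq a γ t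

/-- The string `γ(s), …, γ(s+l-1)` of the edge sequence `γ` is spanning: the edges
appearing in it form a connected spanning subgraph (i.e. cover a spanning tree). -/
def SpanningSeg {n : ℕ} (γ : ℕ → Fin n × Fin n) (s l : ℕ) : Prop :=
  (SimpleGraph.fromRel fun i j =>
      ∃ t, s ≤ t ∧ t < s + l ∧ (γ t = (i, j) ∨ γ t = (j, i))).Connected

/-- An infinite edge sequence is spanning: it contains infinitely many disjoint
finite spanning strings. -/
def InfSpanning {n : ℕ} (γ : ℕ → Fin n × Fin n) : Prop :=
  ∀ t : ℕ, ∃ s l : ℕ, t ≤ s ∧ SpanningSeg γ s l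

lemma Rwalk_cons {n : ℕ} (r : Fin n → Fin n → ℝ) {G : SimpleGraph (Fin n)} {u x v : Fin n}
    (h : G.Adj u x) (w : G.Walk x v) :
    Rwalk r (SimpleGraph.Walk.cons h w) = r u x * Rwalk r w := by
  simp [Rwalk]

/-- If the `A_{ij}` are holonomic for `G`, then the limit probability vector `p` of
Theorem 1 equals the output of Algorithm 1: fixing a base node `v₁`, setting
`q_i = R_w` for any walk `w` from `v₁` to `v_i`, and normalizing. -/
theorem stmt16 {n : ℕ} (G : SimpleGraph (Fin n)) (hGc : G.Connected)
    (a : Fin n → Fin n → ℝ) (ha : ∀ i j, G.Adj i j → a i j ∈ Set.Ioo (0:ℝ) 1)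
    (hol : Holonomic G a)
    (p : Fin n → ℝ) (hp0 : ∀ i, 0 < p i) (hp1 : ∑ i, p i = 1)
    (hconv : ∀ γ : ℕ → Fin n × Fin n, (∀ t, G.Adj (γ t).1 (γ t).2) → InfSpanning γ →
      Filter.Tendsto (Pseq a γ) Filter.atTop (nhds (Matrix.of fun _ j => p j)))
    (v₁ : Fin n) (wk : ∀ i : Fin n, G.Walk v₁ i)
    (q : Fin n → ℝ) (hq : ∀ i, q i = Rwalk (fun i j => a i j / a j i) (wk i)) :
    ∀ i, p i = q i / ∑ j, q j := by
  classical
  set r : Fin n → Fin n → ℝ := fun i j => a i j / a j i with hr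
  -- Step 1: detailed balance along every edge
  have hdb : ∀ i j, G.Adj i j → p i * a i j = p j * a j i := by
    intro i j hij
    -- build a cyclic spanning edge sequence starting from the list L
    set L : List (Fin n × Fin n) :=
      (i, j) :: (List.finRange n).flatMap (fun k => (wk k).darts.map (fun d => d.toProd))
      with hL
    have hlen : 0 < L.length := by simp [hL]
    have hLadj : ∀ e ∈ L, G.Adj e.1 e.2 := by
      intro e he
      rcases List.mem_cons.mp he with h1 | h1
      · rw [h1]; exact hij
      · rcases List.mem_flatMap.mp h1 with ⟨k, -, hk⟩
        rcases List.mem_map.mp hk with ⟨d, -, rfl⟩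
        exact d.adj
    set γ : ℕ → Fin n × Fin n := fun t => L.get ⟨t % L.length, Nat.mod_lt _ hlen⟩ with hγ
    have hγmem : ∀ t, γ t ∈ L := fun t => List.get_mem L _
    have hγadj : ∀ t, G.Adj (γ t).1 (γ t).2 := fun t => hLadj _ (hγmem t)
    have hspan : ∀ s : ℕ, SpanningSeg γ (s * L.length) L.length := by
      intro s
      unfold SpanningSeg
      set Rel := fun x y : Fin n => ∃ t, s * L.length ≤ t ∧ t < s * L.length + L.length ∧
        (γ t = (x, y) ∨ γ t = (y, x)) with hRel
      have hadjH : ∀ e ∈ L, (SimpleGraph.fromRel Rel).Adj e.1 e.2 := by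
        intro e he
        rw [SimpleGraph.fromRel_adj]
        refine ⟨(hLadj e he).ne, Or.inl ?_⟩
        obtain ⟨m, hm, hme⟩ := List.mem_iff_getElem.mp he
        refine ⟨m + s * L.length, by omega, by omega, Or.inl ?_⟩
        have : (m + s * L.length) % L.length = m := by
          rw [Nat.add_mul_mod_self_right, Nat.mod_eq_of_lt hm]
        simp only [hγ]
        simp only [List.get_eq_getElem, this, hme]
      have hreachwalk : ∀ {u v : Fin n} (w : G.Walk u v),
          (∀ d ∈ w.darts, d.toProd ∈ L) → (SimpleGraph.fromRel Rel).Reachable u v := by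
        intro u v w
        induction w with
        | nil => exact fun _ => SimpleGraph.Reachable.refl _
        | cons h w ih =>
          intro hd
          have hmem := hd ⟨(_, _), h⟩
            (by rw [SimpleGraph.Walk.darts_cons]; exact List.mem_cons_self)
          exact (SimpleGraph.Adj.reachable (hadjH _ hmem)).trans
            (ih fun d hdm => hd d
              (by rw [SimpleGraph.Walk.darts_cons]; exact List.mem_cons_of_mem _ hdm))
      have hreach : ∀ k, (SimpleGraph.fromRel Rel).Reachable v₁ k := by
        intro k
        refine hreachwalk (wk k) fun d hd => ?_
        rw [hL]
        refine List.mem_cons.mpr (Or.inr (List.mem_flatMap.mpr ⟨k, ?_, ?_⟩))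
        · exact List.mem_finRange k
        · exact List.mem_map_of_mem hd
      rw [SimpleGraph.connected_iff]
      exact ⟨fun x y => ((hreach x).symm.trans (hreach y)), ⟨v₁⟩⟩
    have hinf : InfSpanning γ := by
      intro t
      exact ⟨t * L.length, L.length, Nat.le_mul_of_pos_right t hlen, hspan t⟩
    -- the prepended sequence
    set γ' : ℕ → Fin n × Fin n := fun t => Nat.casesOn t (i, j) γ with hγ'
    have hγ'adj : ∀ t, G.Adj (γ' t).1 (γ' t).2 := by
      intro t
      cases t with
      | zero => exact hij
      | succ t => exact hγadj t
    have hinf' : InfSpanning γ' := by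
      intro t
      obtain ⟨s, l, hs, hsl⟩ := hinf t
      refine ⟨s + 1, l, by omega, ?_⟩
      unfold SpanningSeg at hsl ⊢
      have hgr : (SimpleGraph.fromRel fun x y => ∃ t, s + 1 ≤ t ∧ t < s + 1 + l ∧
            (γ' t = (x, y) ∨ γ' t = (y, x)))
          = SimpleGraph.fromRel fun x y => ∃ t, s ≤ t ∧ t < s + l ∧
            (γ t = (x, y) ∨ γ t = (y, x)) := by
        ext x y
        simp only [SimpleGraph.fromRel_adj]
        have key : ∀ x y : Fin n,
            (∃ t, s + 1 ≤ t ∧ t < s + 1 + l ∧ (γ' t = (x, y) ∨ γ' t = (y, x))) ↔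
            (∃ t, s ≤ t ∧ t < s + l ∧ (γ t = (x, y) ∨ γ t = (y, x))) := by
          intro x y
          constructor
          · rintro ⟨t', h1, h2, h3⟩
            obtain ⟨t, rfl⟩ : ∃ t, t' = t + 1 := ⟨t' - 1, by omega⟩
            exact ⟨t, by omega, by omega, h3⟩
          · rintro ⟨t, h1, h2, h3⟩
            exact ⟨t + 1, by omega, by omega, h3⟩
        rw [key, key]
      rw [hgr]
      exact hsl
    have h1 := hconv γ hγadj hinf
    have h2 := hconv γ' hγ'adj hinf'
    set A := locMat a i j with hA
    set P := (Matrix.of fun _ j => p j : Matrix (Fin n) (Fin n) ℝ) with hP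
    have hPseq : ∀ t, Pseq a γ' (t + 1) = Pseq a γ t * A := by
      intro t
      induction t with
      | zero =>
        show locMat a (γ' 0).1 (γ' 0).2 * Pseq a γ' 0 = Pseq a γ 0 * A
        show locMat a i j * (1 : Matrix (Fin n) (Fin n) ℝ) = (1 : Matrix (Fin n) (Fin n) ℝ) * A
        rw [mul_one, one_mul]
      | succ t ih =>
        show locMat a (γ' (t + 1)).1 (γ' (t + 1)).2 * Pseq a γ' (t + 1) = Pseq a γ (t + 1) * A
        rw [ih]
        show locMat a (γ t).1 (γ t).2 * (Pseq a γ t * A)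
          = (locMat a (γ t).1 (γ t).2 * Pseq a γ t) * A
        rw [mul_assoc]
    have h3 : Filter.Tendsto (fun t => Pseq a γ' (t + 1)) Filter.atTop (nhds P) :=
      h2.comp (Filter.tendsto_add_atTop_nat 1)
    have h3' : Filter.Tendsto (fun t => Pseq a γ t * A) Filter.atTop (nhds P) := by
      simpa only [hPseq] using h3
    have h4 : Filter.Tendsto (fun t => Pseq a γ t * A) Filter.atTop (nhds (P * A)) :=
      h1.mul tendsto_const_nhds
    have h5 : P * A = P := tendsto_nhds_unique h4 h3'
    have h6 : (P * A) i i = P i i := by rw [h5]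
    have hne : i ≠ j := hij.ne
    have hsum : ∑ l, p l * A l i = p i * (1 - a i j) + p j * a j i := by
      have hfun : ∀ l, p l * A l i =
          (if l = i then p i * (1 - a i j) else 0) + (if l = j then p j * a j i else 0) := by
        intro l
        by_cases h1 : l = i
        · subst h1; simp [hA, locMat, hne, Ne.symm hne]
        · by_cases h2 : l = j
          · subst h2; simp [hA, locMat, h1, Ne.symm hne]
          · simp [hA, locMat, h1, h2]
      simp only [hfun, Finset.sum_add_distrib]
      simp
    have h7 : p i = p i * (1 - a i j) + p j * a j i := by
      have hmul : (P * A) i i = ∑ l, p l * A l i := by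
        simp [Matrix.mul_apply, hP]
      rw [hmul, hsum] at h6
      rw [h6]
      simp [hP]
    linear_combination h7
  -- Step 2: telescoping along walks
  have hwalk : ∀ (u v : Fin n) (w : G.Walk u v), p u * Rwalk r w = p v := by
    intro u v w
    induction w with
    | nil => simp [Rwalk]
    | @cons u x v' h w ih =>
      rw [Rwalk_cons, ← mul_assoc]
      have hax : a x u ≠ 0 := ne_of_gt (ha x u h.symm).1
      have hux : p u * r u x = p x := by
        rw [hr]
        field_simp
        linarith [hdb u x h]
      rw [hux, ih]
  -- Step 3: conclude
  intro i
  have hq' : ∀ k, p v₁ * q k = p k := fun k => by rw [hq]; exact hwalk v₁ k (wk k)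
  have hsum : p v₁ * ∑ j, q j = 1 := by
    rw [Finset.mul_sum]
    simp only [hq']
    exact hp1
  have hv₁ : p v₁ ≠ 0 := ne_of_gt (hp0 v₁)
  have hQ : (∑ j, q j) ≠ 0 := by
    intro h
    rw [h, mul_zero] at hsum
    exact one_ne_zero hsum.symm
  field_simp
  rw [← hq' i, mul_comm (p v₁) (q i)]
  rw [mul_assoc, hsum, mul_one]
end

section
/- The map π assigning to each |E|-tuple of holonomic local stochastic matrices its unique invariant probability vector is surjective onto the interior of the simplex Δ^{n−1}, and for each p in the interior, the preimage π^{−1}(p) is an |E|-dimensional open box (a product of |E| linearly independent open bounded segments) in ℝ^{2|E|}. -/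
open Matrix Finset

/-- The local stochastic matrix attached to the dart `d`, built from the weight
function `a` on darts: identity except for the 2×2 principal block on the endpoints
of `d`, which is `[[1 - a d, a d],[a d.symm, 1 - a d.symm]]`. -/
def locMatD {n : ℕ} {G : SimpleGraph (Fin n)} (a : G.Dart → ℝ) (d : G.Dart) :
    Matrix (Fin n) (Fin n) ℝ :=
  Matrix.of fun k l =>
    if k = d.toProd.1 then
      (if l = d.toProd.1 then 1 - a d else if l = d.toProd.2 then a d else 0)
    else if k = d.toProd.2 then
      (if l = d.toProd.1 then a d.symm else if l = d.toProd.2 then 1 - a d.symm else 0)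
    else if k = l then 1 else 0

/-- The set `H_G` of holonomic tuples of local stochastic matrices, parameterized by
the weights `a : G.Dart → ℝ` (a point of `ℝ^{2|E|}`). -/
def HolSet {n : ℕ} (G : SimpleGraph (Fin n)) : Set (G.Dart → ℝ) :=
  {a | (∀ d, a d ∈ Set.Ioo (0:ℝ) 1) ∧
    ∀ (u : Fin n) (c : G.Walk u u), c.IsCycle → 2 < c.length →
      (c.darts.map fun d => a d / a d.symm).prod = 1}

/-- A `k`-dimensional open box in a real vector space: the set of points
`x₀ + ∑ t_i • v_i` with `t_i` ranging over open bounded intervals and the directions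
`v_i` linearly independent (a Cartesian product of `k` linearly independent open
bounded segments, not necessarily axis-aligned). -/
def IsOpenBox {V : Type*} [AddCommGroup V] [Module ℝ V] (k : ℕ) (B : Set V) : Prop :=
  ∃ (x₀ : V) (v : Fin k → V), LinearIndependent ℝ v ∧
    B = {x | ∃ t : Fin k → ℝ, (∀ i, t i ∈ Set.Ioo (0:ℝ) 1) ∧
      x = x₀ + ∑ i, t i • v i}

namespace Stmt19Aux

variable {n : ℕ} {G : SimpleGraph (Fin n)}

/-- Telescoping product over the darts of a walk. -/
lemma telescope (p : Fin n → ℝ) (hp : ∀ i, p i ≠ 0) {u v : Fin n} (w : G.Walk u v) :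
    (w.darts.map fun d => p d.toProd.2 / p d.toProd.1).prod = p v / p u := by
  induction w with
  | nil => simp [div_self (hp _)]
  | @cons u x v h q ih =>
      rw [SimpleGraph.Walk.darts_cons, List.map_cons, List.prod_cons, ih]
      have : p x / p u * (p v / p x) = p v / p u * (p x / p x) := by ring
      rw [this, div_self (hp x), mul_one]

/-- The invariance equation for a single local matrix is the detailed-balance
equation across the dart. -/
lemma inv_iff (p : Fin n → ℝ) (a : G.Dart → ℝ) (d : G.Dart) :
    Matrix.vecMul p (locMatD a d) = p ↔
      p d.toProd.1 * a d = p d.toProd.2 * a d.symm := by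
  have hne : d.toProd.1 ≠ d.toProd.2 := d.adj.ne
  have key : ∀ l, Matrix.vecMul p (locMatD a d) l = p l +
      (if l = d.toProd.1 then p d.toProd.2 * a d.symm - p d.toProd.1 * a d
       else if l = d.toProd.2 then p d.toProd.1 * a d - p d.toProd.2 * a d.symm else 0) := by
    intro l
    have hM : Matrix.vecMul p (locMatD a d) l = ∑ k, p k * locMatD a d k l := by
      simp [Matrix.vecMul, dotProduct]
    have hs : ({d.toProd.1, d.toProd.2} : Finset (Fin n)) ⊆ Finset.univ :=
      Finset.subset_univ _
    rw [hM, ← Finset.sum_sdiff hs, Finset.sum_pair hne]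
    have h1 : ∑ k ∈ Finset.univ \ {d.toProd.1, d.toProd.2}, p k * locMatD a d k l
        = if l ∈ Finset.univ \ ({d.toProd.1, d.toProd.2} : Finset (Fin n)) then p l else 0 := by
      rw [← Finset.sum_ite_eq' (Finset.univ \ {d.toProd.1, d.toProd.2}) l p]
      apply Finset.sum_congr rfl
      intro k hk
      simp only [Finset.mem_sdiff, Finset.mem_insert, Finset.mem_singleton, not_or] at hk
      have : locMatD a d k l = if k = l then 1 else 0 := by
        simp [locMatD, hk.2.1, hk.2.2]
      rw [this, mul_ite, mul_one, mul_zero]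
    rw [h1]
    by_cases h1l : l = d.toProd.1
    · subst h1l
      simp [locMatD, hne, hne.symm]
      ring
    · by_cases h2l : l = d.toProd.2
      · subst h2l
        simp [locMatD, hne, hne.symm, h1l]
        ring
      · simp [locMatD, h1l, h2l, Ne.symm h1l, Ne.symm h2l]
  constructor
  · intro h
    have h1 := congrFun h d.toProd.1
    rw [key d.toProd.1, if_pos rfl] at h1
    linarith
  · intro h
    funext l
    rw [key l]
    split_ifs <;> [linarith; linarith; ring]

/-- The canonical dart on the edge of `d`. -/
def canD (d : G.Dart) : G.Dart := if d.toProd.1 < d.toProd.2 then d else d.symm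

lemma canD_lt (d : G.Dart) : (canD d).toProd.1 < (canD d).toProd.2 := by
  unfold canD
  split_ifs with h
  · exact h
  · simp only [SimpleGraph.Dart.symm_toProd, Prod.fst_swap, Prod.snd_swap]
    exact (not_lt.mp h).lt_of_ne (Ne.symm d.adj.ne)

lemma canD_eq_self {d : G.Dart} (h : d.toProd.1 < d.toProd.2) : canD d = d := if_pos h

lemma canD_cases (d : G.Dart) : canD d = d ∨ canD d = d.symm := by
  unfold canD; split_ifs <;> simp

lemma canD_symm (d : G.Dart) : canD d.symm = canD d := by
  by_cases h : d.toProd.1 < d.toProd.2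
  · have h' : ¬ d.symm.toProd.1 < d.symm.toProd.2 := by
      simp only [SimpleGraph.Dart.symm_toProd, Prod.fst_swap, Prod.snd_swap, not_lt]
      exact h.le
    rw [canD, if_neg h', canD, if_pos h, SimpleGraph.Dart.symm_symm]
  · have h' : d.symm.toProd.1 < d.symm.toProd.2 := by
      simp only [SimpleGraph.Dart.symm_toProd, Prod.fst_swap, Prod.snd_swap]
      exact (not_lt.mp h).lt_of_ne (Ne.symm d.adj.ne)
    rw [canD, if_pos h', canD, if_neg h]

/-- The canonical dart, as an element of the subtype. -/
def canDs (d : G.Dart) : {d : G.Dart // d.toProd.1 < d.toProd.2} := ⟨canD d, canD_lt d⟩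

variable {k : ℕ}

/-- The index of (the edge of) a dart. -/
def dIdx (e : Fin k ≃ {d : G.Dart // d.toProd.1 < d.toProd.2}) (d : G.Dart) : Fin k :=
  e.symm (canDs d)

lemma dIdx_symm (e : Fin k ≃ {d : G.Dart // d.toProd.1 < d.toProd.2}) (d : G.Dart) :
    dIdx e d.symm = dIdx e d := by
  unfold dIdx
  congr 1
  exact Subtype.ext (canD_symm d)

lemma dIdx_e (e : Fin k ≃ {d : G.Dart // d.toProd.1 < d.toProd.2}) (i : Fin k) :
    dIdx e ((e i : {d : G.Dart // d.toProd.1 < d.toProd.2}) : G.Dart) = i := by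
  unfold dIdx
  have : canDs ((e i : {d : G.Dart // d.toProd.1 < d.toProd.2}) : G.Dart) = e i :=
    Subtype.ext (canD_eq_self (e i).2)
  rw [this, Equiv.symm_apply_apply]

/-- The weight of a dart. -/
noncomputable def wgt (p : Fin n → ℝ) (d : G.Dart) : ℝ :=
  min (p d.toProd.1) (p d.toProd.2) / p d.toProd.1

lemma wgt_pos {p : Fin n → ℝ} (hp0 : ∀ i, 0 < p i) (d : G.Dart) : 0 < wgt p d :=
  div_pos (lt_min (hp0 _) (hp0 _)) (hp0 _)

lemma wgt_le_one {p : Fin n → ℝ} (hp0 : ∀ i, 0 < p i) (d : G.Dart) : wgt p d ≤ 1 :=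
  (div_le_one (hp0 _)).mpr (min_le_left _ _)

lemma wgt_symm (p : Fin n → ℝ) (d : G.Dart) :
    wgt p d.symm = min (p d.toProd.1) (p d.toProd.2) / p d.toProd.2 := by
  simp only [wgt, SimpleGraph.Dart.symm_toProd, Prod.fst_swap, Prod.snd_swap, min_comm]

/-- The box directions. -/
noncomputable def boxVec (p : Fin n → ℝ) (e : Fin k ≃ {d : G.Dart // d.toProd.1 < d.toProd.2})
    (i : Fin k) : G.Dart → ℝ :=
  fun d => if dIdx e d = i then wgt p d else 0

lemma boxVec_eval [DecidableRel G.Adj] (p : Fin n → ℝ)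
    (e : Fin k ≃ {d : G.Dart // d.toProd.1 < d.toProd.2}) (t : Fin k → ℝ) (d : G.Dart) :
    (∑ i, t i • boxVec p e i) d = t (dIdx e d) * wgt p d := by
  rw [Finset.sum_apply]
  simp only [boxVec, Pi.smul_apply, smul_eq_mul, mul_ite, mul_zero]
  simp

lemma boxVec_li [DecidableRel G.Adj] {p : Fin n → ℝ} (hp0 : ∀ i, 0 < p i)
    (e : Fin k ≃ {d : G.Dart // d.toProd.1 < d.toProd.2}) :
    LinearIndependent ℝ (boxVec p e) := by
  rw [Fintype.linearIndependent_iff]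
  intro g hg i
  have h := congrFun hg ((e i : {d : G.Dart // d.toProd.1 < d.toProd.2}) : G.Dart)
  rw [boxVec_eval, dIdx_e] at h
  have hw := wgt_pos hp0 ((e i : {d : G.Dart // d.toProd.1 < d.toProd.2}) : G.Dart)
  simpa [hw.ne'] using h

lemma aux1 (T m x : ℝ) (hx : x ≠ 0) : x * (T * (m / x)) = T * m := by
  field_simp

lemma aux2 (T m x y : ℝ) (hT : T ≠ 0) (hm : m ≠ 0) (hx : x ≠ 0) (hy : y ≠ 0) :
    (T * (m / x)) / (T * (m / y)) = y / x := by
  field_simp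

lemma setEq [DecidableRel G.Adj] {p : Fin n → ℝ} (hp0 : ∀ i, 0 < p i)
    (e : Fin k ≃ {d : G.Dart // d.toProd.1 < d.toProd.2}) :
    {a : G.Dart → ℝ | a ∈ HolSet G ∧ ∀ d, Matrix.vecMul p (locMatD a d) = p}
      = {x | ∃ t : Fin k → ℝ, (∀ i, t i ∈ Set.Ioo (0:ℝ) 1) ∧
          x = 0 + ∑ i, t i • boxVec p e i} := by
  have hp : ∀ i, p i ≠ 0 := fun i => (hp0 i).ne'
  have hm : ∀ d : G.Dart, (0:ℝ) < min (p d.toProd.1) (p d.toProd.2) :=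
    fun d => lt_min (hp0 _) (hp0 _)
  ext a
  simp only [Set.mem_setOf_eq, zero_add, HolSet]
  constructor
  · rintro ⟨⟨hIoo, _⟩, hinv⟩
    have hbal : ∀ d : G.Dart, p d.toProd.1 * a d = p d.toProd.2 * a d.symm :=
      fun d => (inv_iff p a d).mp (hinv d)
    have hdd : ∀ d : G.Dart, a d / wgt p d
        = p d.toProd.1 * a d / min (p d.toProd.1) (p d.toProd.2) := by
      intro d
      rw [wgt, div_div_eq_mul_div, mul_comm]
    have hratio : ∀ d : G.Dart, a d.symm / wgt p d.symm = a d / wgt p d := by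
      intro d
      rw [hdd d, hdd d.symm, hbal d]
      simp only [SimpleGraph.Dart.symm_toProd, Prod.fst_swap, Prod.snd_swap]
      rw [min_comm]
    refine ⟨fun i => a ((e i : {d : G.Dart // d.toProd.1 < d.toProd.2}) : G.Dart)
        / wgt p ((e i : {d : G.Dart // d.toProd.1 < d.toProd.2}) : G.Dart), ?_, ?_⟩
    · intro i
      set c : G.Dart := ((e i : {d : G.Dart // d.toProd.1 < d.toProd.2}) : G.Dart) with hc
      constructor
      · exact div_pos (hIoo c).1 (wgt_pos hp0 c)
      · rw [div_lt_one (wgt_pos hp0 c), wgt, lt_div_iff₀ (hp0 _)]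
        refine lt_min ?_ ?_
        · calc a c * p c.toProd.1 = p c.toProd.1 * a c := mul_comm _ _
            _ < p c.toProd.1 * 1 := mul_lt_mul_of_pos_left (hIoo c).2 (hp0 _)
            _ = p c.toProd.1 := mul_one _
        · calc a c * p c.toProd.1 = p c.toProd.2 * a c.symm := by
                rw [mul_comm]; exact hbal c
            _ < p c.toProd.2 * 1 := mul_lt_mul_of_pos_left (hIoo c.symm).2 (hp0 _)
            _ = p c.toProd.2 := mul_one _
    · funext d
      rw [boxVec_eval]
      have he : ((e (dIdx e d) : {d : G.Dart // d.toProd.1 < d.toProd.2}) : G.Dart)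
          = canD d := by
        simp [dIdx, canDs]
      rw [he]
      have hcc : a (canD d) / wgt p (canD d) = a d / wgt p d := by
        rcases canD_cases d with h | h
        · rw [h]
        · rw [h]; exact hratio d
      rw [hcc, div_mul_cancel₀ _ (wgt_pos hp0 d).ne']
  · rintro ⟨t, ht, rfl⟩
    have haval : ∀ d : G.Dart, (∑ i, t i • boxVec p e i) d = t (dIdx e d) * wgt p d :=
      boxVec_eval p e t
    have haIoo : ∀ d : G.Dart, (∑ i, t i • boxVec p e i) d ∈ Set.Ioo (0:ℝ) 1 := by
      intro d
      rw [haval d]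
      constructor
      · exact mul_pos (ht _).1 (wgt_pos hp0 d)
      · calc t (dIdx e d) * wgt p d < 1 * wgt p d :=
              mul_lt_mul_of_pos_right (ht _).2 (wgt_pos hp0 d)
          _ = wgt p d := one_mul _
          _ ≤ 1 := wgt_le_one hp0 d
    have hbal : ∀ d : G.Dart, p d.toProd.1 * ((∑ i, t i • boxVec p e i) d)
        = p d.toProd.2 * ((∑ i, t i • boxVec p e i) d.symm) := by
      intro d
      rw [haval d, haval d.symm, dIdx_symm, wgt_symm, wgt,
        aux1 _ _ _ (hp d.toProd.1), aux1 _ _ _ (hp d.toProd.2)]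
    refine ⟨⟨haIoo, ?_⟩, fun d => (inv_iff p _ d).mpr (hbal d)⟩
    intro u c _ _
    have hmap : (c.darts.map fun d =>
          (∑ i, t i • boxVec p e i) d / (∑ i, t i • boxVec p e i) d.symm)
        = c.darts.map fun d => p d.toProd.2 / p d.toProd.1 := by
      apply List.map_congr_left
      intro d _
      have ht0 : t (dIdx e d) ≠ 0 := (ht _).1.ne'
      have hm0 : min (p d.toProd.1) (p d.toProd.2) ≠ 0 := (hm d).ne'
      rw [haval d, haval d.symm, dIdx_symm, wgt_symm, wgt,
        aux2 _ _ _ _ ht0 hm0 (hp d.toProd.1) (hp d.toProd.2)]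
    rw [hmap, telescope p hp c, div_self (hp u)]

lemma card_canDart [DecidableRel G.Adj] :
    Fintype.card {d : G.Dart // d.toProd.1 < d.toProd.2} = G.edgeFinset.card := by
  rw [Fintype.card_subtype]
  apply Finset.card_bij (fun d _ => SimpleGraph.Dart.edge d)
  · intro d hd
    exact SimpleGraph.mem_edgeFinset.mpr d.edge_mem
  · intro d1 h1 d2 h2 hEq
    simp only [Finset.mem_filter, Finset.mem_univ, true_and] at h1 h2
    rcases (SimpleGraph.dart_edge_eq_iff d1 d2).mp hEq with rfl | rfl
    · rfl
    · exfalso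
      simp only [SimpleGraph.Dart.symm_toProd, Prod.fst_swap, Prod.snd_swap] at h1
      exact absurd h1 (not_lt.mpr h2.le)
  · intro ed hed
    have hed' : ed ∈ G.edgeSet := SimpleGraph.mem_edgeFinset.mp hed
    clear hed
    revert hed'
    refine Sym2.ind (fun u v => ?_) ed
    intro hed'
    have hadj : G.Adj u v := (G.mem_edgeSet).mp hed'
    rcases lt_or_gt_of_ne hadj.ne with h | h
    · exact ⟨SimpleGraph.Dart.mk (u, v) hadj, by simp [h], rfl⟩
    · exact ⟨SimpleGraph.Dart.mk (v, u) hadj.symm, by simp [h], Sym2.eq_swap⟩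

end Stmt19Aux

/-- The map `π` from holonomic tuples to their unique invariant probability vector is
surjective onto the interior of the simplex, and each fiber `π⁻¹(p)` is an
`|E|`-dimensional open box. -/
theorem stmt19 {n : ℕ} (G : SimpleGraph (Fin n)) [DecidableRel G.Adj]
    (hGc : G.Connected)
    (p : Fin n → ℝ) (hp0 : ∀ i, 0 < p i) (hp1 : ∑ i, p i = 1) :
    ({a : G.Dart → ℝ | a ∈ HolSet G ∧
        ∀ d, Matrix.vecMul p (locMatD a d) = p}).Nonempty ∧
    IsOpenBox G.edgeFinset.card
      {a : G.Dart → ℝ | a ∈ HolSet G ∧ ∀ d, Matrix.vecMul p (locMatD a d) = p} := by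
  have hcard : Fintype.card {d : G.Dart // d.toProd.1 < d.toProd.2} = G.edgeFinset.card :=
    Stmt19Aux.card_canDart
  let e : Fin G.edgeFinset.card ≃ {d : G.Dart // d.toProd.1 < d.toProd.2} :=
    (Fintype.equivFinOfCardEq hcard).symm
  have hEq := Stmt19Aux.setEq hp0 e
  constructor
  · refine ⟨0 + ∑ i, (1/2 : ℝ) • Stmt19Aux.boxVec p e i, ?_⟩
    rw [hEq]
    exact ⟨fun _ => 1/2, fun i => by norm_num, rfl⟩
  · exact ⟨0, Stmt19Aux.boxVec p e, Stmt19Aux.boxVec_li hp0 e, hEq⟩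
end
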